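/- arXiv:1303.0581 — 3 statements merged into one kernel-verified Lean document; each statement's English description precedes it below -/
import Mathlib

section
/- With the sets G₁, …, G_k and ℍ as in the context, define H_ℓ = {ξ ∈ {0,2}^ℤ : σ^s(ξ) ∈ G_ℓ for every s ∈ ℤ} for 1 ≤ ℓ ≤ k. Then H_ℓ = ℍ ∩ G_ℓ for every ℓ, the sets H₁, …, H_k are pairwise disjoint, and ℍ = H₁ ∪ ⋯ ∪ H_k. -/
/-!
Bi-infinite sequences over the alphabet {0,2} are modeled as `ξ : ℤ → Bool`, where
`true` represents the symbol `2` and `false` represents the symbol `0`.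
-/

/-- The number of occurrences of the symbol `2` in the window of length `L`
starting at position `m` of the finite word `w`. -/
def winCount (w : List Bool) (m L : ℕ) : ℕ := ((w.drop m).take L).count true

/-- A finite word `w` over `{0,2}` is `(i,j,L)`-admissible if every sub-word of `L`
consecutive letters contains at least `i` and at most `j` occurrences of the symbol `2`. -/
def Admissible (i j L : ℕ) (w : List Bool) : Prop :=
  ∀ m, m + L ≤ w.length → i ≤ winCount w m L ∧ winCount w m L ≤ j

/-- The shift by `s ∈ ℤ` on `{0,2}^ℤ` (`zshift 1` is the left shift `σ`). -/
def zshift (s : ℤ) (ξ : ℤ → Bool) : ℤ → Bool := fun n => ξ (n + s)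

/-- The finite word `ξ₀ ξ₁ ⋯ ξ_{L−1}` of a bi-infinite sequence `ξ`. -/
def initialWord (L : ℕ) (ξ : ℤ → Bool) : List Bool :=
  List.ofFn fun r : Fin L => ξ ((r : ℕ) : ℤ)

/-!
For `ℓ < m` one has `j_ℓ + (L_m − L_ℓ) + 1 < i_m`. The number of `2`s among the first `n`
letters grows by at most `m − n` when `n` is enlarged to `m`, and changes by at most `1` under
the shift. Hence no point lies in two of the `G_ℓ`, and no point of `G_ℓ` is shifted into a
`G_m` with `m ≠ ℓ`. So for `ξ ∈ ℍ` the index `ℓ` with `σ^s ξ ∈ G_ℓ` does not depend on `s`,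
which gives all three claims.
-/

theorem zshift_zero (ξ : ℤ → Bool) : zshift 0 ξ = ξ := by
  funext n
  simp [zshift]

theorem zshift_add_one (s : ℤ) (ξ : ℤ → Bool) : zshift (s + 1) ξ = zshift 1 (zshift s ξ) := by
  funext n
  simp only [zshift]
  ring_nf

def shiftHull (A : Set (ℤ → Bool)) : Set (ℤ → Bool) := {ξ | ∀ s, zshift s ξ ∈ A}

theorem shiftHull_mono {A B : Set (ℤ → Bool)} (h : A ⊆ B) : shiftHull A ⊆ shiftHull B :=
  fun _ hξ s => h (hξ s)

theorem shiftHull_subset (A : Set (ℤ → Bool)) : shiftHull A ⊆ A := fun ξ hξ => by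
  simpa [zshift_zero] using hξ 0

section Decomposition

variable {ι : Type*} {S : Set ι} {G : ι → Set (ℤ → Bool)}

theorem shiftHull_biUnion_eq
    (hstep : ∀ ℓ ∈ S, ∀ m ∈ S, ∀ ξ, ξ ∈ G ℓ → zshift 1 ξ ∈ G m → ℓ = m) :
    shiftHull (⋃ ℓ ∈ S, G ℓ) = ⋃ ℓ ∈ S, shiftHull (G ℓ) := by
  refine subset_antisymm (fun ξ hξ => ?_)
    (Set.iUnion₂_subset fun ℓ hℓ => shiftHull_mono (Set.subset_biUnion_of_mem hℓ))
  have hmem : ∀ s, ∃ ℓ ∈ S, zshift s ξ ∈ G ℓ := fun s => by simpa using hξ s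
  choose f hfS hfG using hmem
  have hperiodic : Function.Periodic f 1 := fun s =>
    (hstep _ (hfS s) _ (hfS (s + 1)) _ (hfG s) (zshift_add_one s ξ ▸ hfG (s + 1))).symm
  have hconst (s : ℤ) : f s = f 0 := by simpa using hperiodic.int_mul_eq s
  exact Set.mem_biUnion (hfS 0) fun s => hconst s ▸ hfG s

theorem shiftHull_eq_shiftHull_biUnion_inter (hdisj : S.PairwiseDisjoint G)
    (hstep : ∀ ℓ ∈ S, ∀ m ∈ S, ∀ ξ, ξ ∈ G ℓ → zshift 1 ξ ∈ G m → ℓ = m) {ℓ : ι} (hℓ : ℓ ∈ S) :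
    shiftHull (G ℓ) = shiftHull (⋃ m ∈ S, G m) ∩ G ℓ := by
  refine subset_antisymm (Set.subset_inter
    (shiftHull_mono (Set.subset_biUnion_of_mem hℓ)) (shiftHull_subset _)) ?_
  rintro ξ ⟨hξ, hξℓ⟩
  rw [shiftHull_biUnion_eq hstep] at hξ
  obtain ⟨m, hm, hξm⟩ := Set.mem_iUnion₂.1 hξ
  obtain rfl : m = ℓ :=
    hdisj.elim hm hℓ (Set.not_disjoint_iff.2 ⟨ξ, shiftHull_subset _ hξm, hξℓ⟩)
  exact hξm

end Decomposition

theorem admissible_length_iff {i j : ℕ} (w : List Bool) :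
    Admissible i j w.length w ↔ i ≤ w.count true ∧ w.count true ≤ j := by
  have hwin : winCount w 0 w.length = w.count true := by simp [winCount]
  constructor
  · intro h
    simpa [hwin] using h 0 (by omega)
  · intro h m hm
    obtain rfl : m = 0 := by omega
    rwa [hwin]

@[simp]
theorem length_initialWord (n : ℕ) (ξ : ℤ → Bool) : (initialWord n ξ).length = n := by
  simp [initialWord]

theorem initialWord_succ (n : ℕ) (ξ : ℤ → Bool) :
    initialWord (n + 1) ξ = ξ 0 :: initialWord n (zshift 1 ξ) := by
  simp [initialWord, List.ofFn_succ, zshift]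

theorem take_initialWord {n m : ℕ} (h : n ≤ m) (ξ : ℤ → Bool) :
    (initialWord m ξ).take n = initialWord n ξ := by
  apply List.ext_getElem <;> simp [initialWord, h]

def windowCount (n : ℕ) (ξ : ℤ → Bool) : ℕ := (initialWord n ξ).count true

theorem admissible_initialWord_iff {i j n : ℕ} (ξ : ℤ → Bool) :
    Admissible i j n (initialWord n ξ) ↔ i ≤ windowCount n ξ ∧ windowCount n ξ ≤ j := by
  simpa [windowCount] using admissible_length_iff (i := i) (j := j) (initialWord n ξ)

theorem windowCount_mono (ξ : ℤ → Bool) : Monotone fun n => windowCount n ξ := fun n m h => by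
  simp only [windowCount, ← take_initialWord h]
  exact (List.take_sublist _ _).count_le _

theorem windowCount_le_add_sub (n m : ℕ) (ξ : ℤ → Bool) :
    windowCount m ξ ≤ windowCount n ξ + (m - n) := by
  rcases le_total m n with h | h
  · exact (windowCount_mono ξ h).trans (Nat.le_add_right _ _)
  · calc windowCount m ξ
          = ((initialWord m ξ).take n).count true + ((initialWord m ξ).drop n).count true := by
            rw [← List.count_append, List.take_append_drop, windowCount]
      _ ≤ windowCount n ξ + (m - n) := by
            rw [take_initialWord h]
            exact Nat.add_le_add_left (List.count_le_length.trans (by simp)) _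

theorem windowCount_succ (n : ℕ) (ξ : ℤ → Bool) :
    windowCount (n + 1) ξ = windowCount n (zshift 1 ξ) + (ξ 0).toNat := by
  cases h : ξ 0 <;> simp [windowCount, initialWord_succ, h]

def ShiftAdjacent (ξ η : ℤ → Bool) : Prop := η = ξ ∨ η = zshift 1 ξ ∨ ξ = zshift 1 η

theorem ShiftAdjacent.symm {ξ η : ℤ → Bool} (h : ShiftAdjacent ξ η) : ShiftAdjacent η ξ := by
  rcases h with rfl | h | h
  exacts [Or.inl rfl, Or.inr (Or.inr h), Or.inr (Or.inl h)]

theorem windowCount_le_of_shiftAdjacent {ξ η : ℤ → Bool} (h : ShiftAdjacent ξ η) (n m : ℕ) :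
    windowCount m η ≤ windowCount n ξ + (m - n) + 1 := by
  rcases h with rfl | rfl | rfl
  · have := windowCount_le_add_sub n m η
    omega
  · have := windowCount_le_add_sub n (m + 1) ξ
    have := windowCount_succ m ξ
    omega
  · have := windowCount_le_add_sub n m (zshift 1 η)
    have := windowCount_succ m η
    have : windowCount m η ≤ windowCount (m + 1) η := windowCount_mono η m.le_succ
    have := Bool.toNat_le (η 0)
    omega

theorem not_admissible_of_shiftAdjacent {ξ η : ℤ → Bool} (h : ShiftAdjacent ξ η)
    {i j p i' j' q : ℕ} (hgap : j + (q - p) + 1 < i') (hξ : Admissible i j p (initialWord p ξ)) :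
    ¬ Admissible i' j' q (initialWord q η) := by
  rw [admissible_initialWord_iff] at hξ ⊢
  have := windowCount_le_of_shiftAdjacent h p q
  omega

theorem j_add_L_sub_add_one_lt_i (k : ℕ) (L i j : ℕ → ℕ)
    (hLmono : ∀ ℓ, 1 ≤ ℓ → ℓ < k → L ℓ < L (ℓ + 1))
    (hL1 : 3 * k + 1 < L 1)
    (hj1 : j 1 = L 1 - (3 * k + 1))
    (hj : ∀ ℓ, 2 ≤ ℓ → ℓ ≤ k → j ℓ = L ℓ - (3 * (k - ℓ) + 4))
    (hi : ∀ ℓ, 2 ≤ ℓ → ℓ ≤ k → i ℓ = j ℓ - 1)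
    (hipos : ∀ ℓ, 2 ≤ ℓ → ℓ ≤ k → 1 ≤ i ℓ)
    {ℓ m : ℕ} (hℓ : 1 ≤ ℓ) (hℓm : ℓ < m) (hm : m ≤ k) :
    j ℓ + (L m - L ℓ) + 1 < i m := by
  have hL : StrictMonoOn L (Set.Icc 1 k) :=
    strictMonoOn_of_lt_add_one Set.ordConnected_Icc fun a _ ha ha' => hLmono a ha.1 ha'.2
  have hLℓm : L ℓ < L m := hL ⟨hℓ, by omega⟩ ⟨by omega, hm⟩ hℓm
  have := hj m (by omega) hm
  have := hi m (by omega) hm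
  have := hipos m (by omega) hm
  rcases Nat.lt_or_ge ℓ 2 with hℓ1 | hℓ2
  · obtain rfl : ℓ = 1 := by omega
    omega
  · have := hj ℓ hℓ2 (by omega)
    have := hi ℓ hℓ2 (by omega)
    have := hipos ℓ hℓ2 (by omega)
    omega

theorem H_decomposition_general
    (k : ℕ) (L i j : ℕ → ℕ)
    (hLmono : ∀ ℓ, 1 ≤ ℓ → ℓ < k → L ℓ < L (ℓ + 1))
    (hL1 : 3 * k + 1 < L 1)
    (hj1 : j 1 = L 1 - (3 * k + 1))
    (hj : ∀ ℓ, 2 ≤ ℓ → ℓ ≤ k → j ℓ = L ℓ - (3 * (k - ℓ) + 4))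
    (hi : ∀ ℓ, 2 ≤ ℓ → ℓ ≤ k → i ℓ = j ℓ - 1)
    (hipos : ∀ ℓ, 2 ≤ ℓ → ℓ ≤ k → 1 ≤ i ℓ)
    (G : ℕ → Set (ℤ → Bool))
    (hG : ∀ ℓ, G ℓ = {ξ | Admissible (i ℓ) (j ℓ) (L ℓ) (initialWord (L ℓ) ξ)})
    (H : Set (ℤ → Bool))
    (hH : H = {ξ | ∀ s : ℤ, ∃ ℓ, 1 ≤ ℓ ∧ ℓ ≤ k ∧ zshift s ξ ∈ G ℓ})
    (Hl : ℕ → Set (ℤ → Bool))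
    (hHl : ∀ ℓ, Hl ℓ = {ξ | ∀ s : ℤ, zshift s ξ ∈ G ℓ}) :
    (∀ ℓ, 1 ≤ ℓ → ℓ ≤ k → Hl ℓ = H ∩ G ℓ) ∧
    (∀ ℓ m, 1 ≤ ℓ → ℓ ≤ k → 1 ≤ m → m ≤ k → ℓ ≠ m → Disjoint (Hl ℓ) (Hl m)) ∧
    H = ⋃ ℓ ∈ Set.Icc 1 k, Hl ℓ := by
  have hgap {ℓ m : ℕ} : 1 ≤ ℓ → ℓ < m → m ≤ k → j ℓ + (L m - L ℓ) + 1 < i m :=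
    j_add_L_sub_add_one_lt_i k L i j hLmono hL1 hj1 hj hi hipos
  have hsep : ∀ ℓ ∈ Set.Icc 1 k, ∀ m ∈ Set.Icc 1 k, ∀ ξ η,
      ShiftAdjacent ξ η → ξ ∈ G ℓ → η ∈ G m → ℓ = m := by
    rintro ℓ ⟨hℓ1, hℓk⟩ m ⟨hm1, hmk⟩ ξ η hadj hξ hη
    rw [hG] at hξ hη
    rcases lt_trichotomy ℓ m with hlt | rfl | hlt
    · exact absurd hη (not_admissible_of_shiftAdjacent hadj (hgap hℓ1 hlt hmk) hξ)
    · rfl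
    · exact absurd hξ (not_admissible_of_shiftAdjacent hadj.symm (hgap hm1 hlt hℓk) hη)
  have hdisj : (Set.Icc 1 k).PairwiseDisjoint G := fun ℓ hℓ m hm hne =>
    Set.disjoint_left.2 fun ξ hξ hξ' => hne (hsep ℓ hℓ m hm ξ ξ (Or.inl rfl) hξ hξ')
  have hstep : ∀ ℓ ∈ Set.Icc 1 k, ∀ m ∈ Set.Icc 1 k, ∀ ξ, ξ ∈ G ℓ → zshift 1 ξ ∈ G m → ℓ = m :=
    fun ℓ hℓ m hm ξ => hsep ℓ hℓ m hm ξ _ (Or.inr (Or.inl rfl))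
  obtain rfl : H = shiftHull (⋃ ℓ ∈ Set.Icc 1 k, G ℓ) := by
    ext ξ
    simp [hH, shiftHull, and_assoc]
  obtain rfl : Hl = fun ℓ => shiftHull (G ℓ) := funext hHl
  exact ⟨fun ℓ h1 h2 => shiftHull_eq_shiftHull_biUnion_inter hdisj hstep ⟨h1, h2⟩,
    fun ℓ m h1 h2 h3 h4 => (hdisj.mono fun ℓ => shiftHull_subset (G ℓ)) ⟨h1, h2⟩ ⟨h3, h4⟩,
    shiftHull_biUnion_eq hstep⟩

/-- with `G₁, …, G_k`, `ℍ` and `H_ℓ = ⋂_{s∈ℤ} σ^s(G_ℓ)` as in the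
construction, one has `H_ℓ = ℍ ∩ G_ℓ`, the sets `H₁, …, H_k` are pairwise disjoint,
and `ℍ = H₁ ∪ ⋯ ∪ H_k`. -/
theorem H_decomposition
    (k : ℕ) (hk : 1 ≤ k) (L i j : ℕ → ℕ)
    (hLmono : ∀ ℓ, 1 ≤ ℓ → ℓ < k → L ℓ < L (ℓ + 1))
    (hL1 : 3 * k + 1 < L 1)
    (hi1 : i 1 = 0) (hj1 : j 1 = L 1 - (3 * k + 1))
    (hj : ∀ ℓ, 2 ≤ ℓ → ℓ ≤ k → j ℓ = L ℓ - (3 * (k - ℓ) + 4))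
    (hi : ∀ ℓ, 2 ≤ ℓ → ℓ ≤ k → i ℓ = j ℓ - 1)
    (hipos : ∀ ℓ, 2 ≤ ℓ → ℓ ≤ k → 1 ≤ i ℓ)
    (hLi : ∀ ℓ, 1 ≤ ℓ → ℓ < k → L ℓ < i (ℓ + 1))
    (G : ℕ → Set (ℤ → Bool))
    (hG : ∀ ℓ, G ℓ = {ξ | Admissible (i ℓ) (j ℓ) (L ℓ) (initialWord (L ℓ) ξ)})
    (H : Set (ℤ → Bool))
    (hH : H = {ξ | ∀ s : ℤ, ∃ ℓ, 1 ≤ ℓ ∧ ℓ ≤ k ∧ zshift s ξ ∈ G ℓ})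
    (Hl : ℕ → Set (ℤ → Bool))
    (hHl : ∀ ℓ, Hl ℓ = {ξ | ∀ s : ℤ, zshift s ξ ∈ G ℓ}) :
    (∀ ℓ, 1 ≤ ℓ → ℓ ≤ k → Hl ℓ = H ∩ G ℓ) ∧
    (∀ ℓ m, 1 ≤ ℓ → ℓ ≤ k → 1 ≤ m → m ≤ k → ℓ ≠ m → Disjoint (Hl ℓ) (Hl m)) ∧
    H = ⋃ ℓ ∈ Set.Icc 1 k, Hl ℓ :=
  H_decomposition_general k L i j hLmono hL1 hj1 hj hi hipos G hG H hH Hl hHl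
end

section
/- Let k ≥ 2 be an integer and β₀ > β₂ > 1 real numbers, and for 1 ≤ ℓ ≤ k let 0 ≤ i_ℓ < j_ℓ ≤ L_ℓ be integers with L_ℓ ≥ 1; put H_ℓ = H(i_ℓ, j_ℓ, L_ℓ) and define a_ℓ⁻ = (j_ℓ log β₂ + (L_ℓ − j_ℓ) log β₀)/L_ℓ and a_ℓ⁺ = (i_ℓ log β₂ + (L_ℓ − i_ℓ) log β₀)/L_ℓ. For every ℓ and every t ∈ ℝ the pressure P_ℓ(t) = P_{H_ℓ}(t) exists; write h_ℓ = P_ℓ(0), and for 1 ≤ ℓ ≤ k−1 set τ_ℓ⁻ = −(h_ℓ − h_{ℓ+1})/(a_{ℓ+1}⁻ − a_ℓ⁺) and τ_ℓ⁺ = −(h_ℓ − h_{ℓ+1})/(a_{ℓ+1}⁺ − a_ℓ⁻). Assume that h_{ℓ+1} < h_ℓ and a_ℓ⁺ < a_{ℓ+1}⁻ for every 1 ≤ ℓ ≤ k−1, and that τ_{ℓ+1}⁺ < τ_ℓ⁻ for every 1 ≤ ℓ ≤ k−2. Define ℙ(t) = max_{1≤ℓ≤k} P_ℓ(t). Then there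 exist real numbers t_{k−1} < t_{k−2} < ⋯ < t₁ < 0 such that: (i) ℙ(t) = P₁(t) > P_j(t) for all j ≠ 1 and all t > t₁; (ii) for each 2 ≤ ℓ ≤ k−1, ℙ(t) = P_ℓ(t) > P_j(t) for all j ≠ ℓ and all t ∈ (t_ℓ, t_{ℓ−1}); (iii) ℙ(t) = P_k(t) > P_j(t) for all j ≠ k and all t < t_{k−1}; (iv) for each 1 ≤ ℓ ≤ k−1 the one-sided derivatives of the convex function ℙ at t_ℓ satisfy D⁻ℙ(t_ℓ) ≤ −a_{ℓ+1}⁻ < −a_ℓ⁺ ≤ D⁺ℙ(t_ℓ); in particular ℙ is not differentiable at any of the points t₁, …, t_{k−1}. -/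
open Filter

/-!
Bi-infinite sequences over the alphabet {0,2} are modeled as `ξ : ℤ → Bool`, where
`true` represents the symbol `2` and `false` represents the symbol `0`.
-/

/-- Number of occurrences of the symbol `2` in the window `ξ_m ξ_{m+1} ⋯ ξ_{m+L-1}`. -/
def zwinCount (ξ : ℤ → Bool) (m : ℤ) (L : ℕ) : ℕ :=
  ((Finset.range L).filter fun r : ℕ => ξ (m + (r : ℤ)) = true).card

/-- The subshift `H(i,j,L)`. -/
def Hset (i j L : ℕ) : Set (ℤ → Bool) :=
  {ξ | ∀ m : ℤ, i ≤ zwinCount ξ m L ∧ zwinCount ξ m L ≤ j}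

/-- The word `w ∈ {0,2}^n` occurs in a point of `X`. -/
def WordOccurs (X : Set (ℤ → Bool)) {n : ℕ} (w : Fin n → Bool) : Prop :=
  ∃ ξ ∈ X, ∃ m : ℤ, ∀ r : Fin n, w r = ξ (m + (r : ℕ))

open Classical in
/-- The partition function `Z_n(X,t) = Σ_{w ∈ W_n(X)} (β₀^{n₀(w)} β₂^{n₂(w)})^{−t}`. -/
noncomputable def Zfun (β₀ β₂ : ℝ) (X : Set (ℤ → Bool)) (t : ℝ) (n : ℕ) : ℝ :=
  ∑ w : Fin n → Bool,
    if WordOccurs X w then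
      ((β₀ ^ (Finset.univ.filter fun r => w r = false).card) *
        (β₂ ^ (Finset.univ.filter fun r => w r = true).card)) ^ (-t)
    else 0

/-- The pressure `P_X(t) = lim_{n→∞} (1/n) log Z_n(X,t)` (whenever the limit exists,
`limUnder` picks it out). -/
noncomputable def pressureOf (β₀ β₂ : ℝ) (X : Set (ℤ → Bool)) (t : ℝ) : ℝ :=
  limUnder atTop (fun n : ℕ => Real.log (Zfun β₀ β₂ X t n) / n)

/-!
Write `Z_n(X,t) = ∑_{w ∈ W_n(X)} exp (-t S(w))`, where `S(w) = n₀(w) log β₀ + n₂(w) log β₂` is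
the Birkhoff sum of `-φ` along `w`. Cutting words shows that `Z_n` is submultiplicative, so
Fekete's lemma gives the pressure, and Hölder's inequality makes every `log Z_n`, hence `P_X`,
convex. In a point of `H(i,j,L)` every window of length `L` has average weight in
`[a⁻, a⁺]`, so `S(w) = n·[a⁻, a⁺] + O(L)` and all difference quotients of `P_X` lie in
`[-a⁺, -a⁻]`.

Hence `P_{ℓ+1} - P_ℓ` decreases with slope at most `-(a⁻_{ℓ+1} - a⁺_ℓ) < 0`; it is negative at
`0` and these slope bounds place its unique zero `t_ℓ` in `[τ⁻_ℓ, τ⁺_ℓ]`. The ordering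
`τ⁺_{ℓ+1} < τ⁻_ℓ` makes the `t_ℓ` decrease, so between consecutive crossings a single `P_ℓ`
is maximal. At `t_ℓ`, `ℙ` agrees with `P_{ℓ+1}` on the left and with `P_ℓ` on the right, and
the slope bounds separate their one-sided derivatives.
-/

open Finset Topology

theorem ConvexOn.of_tendsto {E ι : Type*} [AddCommGroup E] [Module ℝ E] {s : Set E}
    {l : Filter ι} [l.NeBot] {F : ι → E → ℝ} {f : E → ℝ} (hs : Convex ℝ s)
    (hF : ∀ᶠ n in l, ConvexOn ℝ s (F n)) (hlim : ∀ x ∈ s, Tendsto (fun n => F n x) l (𝓝 (f x))) :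
    ConvexOn ℝ s f := by
  refine ⟨hs, fun x hx y hy a b ha hb hab => ?_⟩
  refine le_of_tendsto_of_tendsto (hlim _ (hs hx hy ha hb hab))
    (((hlim x hx).const_smul a).add ((hlim y hy).const_smul b)) ?_
  filter_upwards [hF] with n hn using hn.2 hx hy ha hb hab

theorem convexOn_log_sum_exp {ι : Type*} (s : Finset ι) (c : ι → ℝ) :
    ConvexOn ℝ Set.univ fun t => Real.log (∑ i ∈ s, Real.exp (t * c i)) := by
  refine ⟨convex_univ, fun x _ y _ a b ha hb hab => ?_⟩
  rcases ha.eq_or_lt with rfl | ha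
  · simp [show b = 1 by linarith]
  rcases hb.eq_or_lt with rfl | hb
  · simp [show a = 1 by linarith]
  rcases s.eq_empty_or_nonempty with rfl | hs
  · simp
  have hpow : ∀ {d : ℝ}, 0 < d → ∀ u, Real.exp (d * u) ^ (1 / d) = Real.exp u := fun hd u => by
    rw [← Real.exp_mul]
    field_simp
  have holder := Real.inner_le_Lp_mul_Lq_of_nonneg s (Real.holderConjugate_one_div ha hb hab)
    (f := fun i => Real.exp (a * (x * c i))) (g := fun i => Real.exp (b * (y * c i)))
    (fun _ _ => (Real.exp_pos _).le) (fun _ _ => (Real.exp_pos _).le)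
  simp only [hpow ha, hpow hb, one_div_one_div, ← Real.exp_add] at holder
  have hX : 0 < ∑ i ∈ s, Real.exp (x * c i) := sum_pos (fun _ _ => Real.exp_pos _) hs
  have hY : 0 < ∑ i ∈ s, Real.exp (y * c i) := sum_pos (fun _ _ => Real.exp_pos _) hs
  calc Real.log (∑ i ∈ s, Real.exp ((a • x + b • y) * c i))
      ≤ Real.log ((∑ i ∈ s, Real.exp (x * c i)) ^ a * (∑ i ∈ s, Real.exp (y * c i)) ^ b) := by
        refine Real.log_le_log (sum_pos (fun _ _ => Real.exp_pos _) hs) (le_of_eq_of_le ?_ holder)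
        simp only [smul_eq_mul]
        congr! 2
        ring
    _ = a • Real.log (∑ i ∈ s, Real.exp (x * c i)) +
          b • Real.log (∑ i ∈ s, Real.exp (y * c i)) := by
        rw [Real.log_mul (by positivity) (by positivity), Real.log_rpow hX, Real.log_rpow hY]
        rfl

def HasSlopesIn (f : ℝ → ℝ) (lo hi : ℝ) : Prop :=
  ∀ ⦃t s⦄, t ≤ s → lo * (s - t) ≤ f s - f t ∧ f s - f t ≤ hi * (s - t)

namespace HasSlopesIn

variable {f g : ℝ → ℝ} {lo hi : ℝ}

lemma div_const (hf : HasSlopesIn f lo hi) {c : ℝ} (hc : 0 < c) :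
    HasSlopesIn (fun t => f t / c) (lo / c) (hi / c) := fun t s hts => by
  obtain ⟨h₁, h₂⟩ := hf hts
  simp only [← sub_div, div_mul_eq_mul_div]
  exact ⟨div_le_div_of_nonneg_right h₁ hc.le, div_le_div_of_nonneg_right h₂ hc.le⟩

lemma sub {lo' hi' : ℝ} (hf : HasSlopesIn f lo hi) (hg : HasSlopesIn g lo' hi') :
    HasSlopesIn (f - g) (lo - hi') (hi - lo') := fun t s hts => by
  obtain ⟨hf₁, hf₂⟩ := hf hts
  obtain ⟨hg₁, hg₂⟩ := hg hts
  simp only [Pi.sub_apply]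
  constructor <;> linarith

lemma of_tendsto {ι : Type*} {l : Filter ι} [l.NeBot] {F : ι → ℝ → ℝ} {lo' hi' : ι → ℝ}
    (hF : ∀ᶠ n in l, HasSlopesIn (F n) (lo' n) (hi' n)) (hlo : Tendsto lo' l (𝓝 lo))
    (hhi : Tendsto hi' l (𝓝 hi)) (hlim : ∀ t, Tendsto (fun n => F n t) l (𝓝 (f t))) :
    HasSlopesIn f lo hi := fun t s hts => by
  have hdiff := (hlim s).sub (hlim t)
  exact ⟨le_of_tendsto_of_tendsto (hlo.mul_const _) hdiff (hF.mono fun n hn => (hn hts).1),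
    le_of_tendsto_of_tendsto hdiff (hhi.mul_const _) (hF.mono fun n hn => (hn hts).2)⟩

lemma slope_mem (hf : HasSlopesIn f lo hi) {x y : ℝ} (hxy : x ≠ y) :
    slope f x y ∈ Set.Icc lo hi := by
  wlog h : x < y generalizing x y
  · rw [slope_comm]
    exact this hxy.symm (hxy.lt_or_gt.resolve_left h)
  obtain ⟨h₁, h₂⟩ := hf h.le
  rw [slope_def_field]
  exact ⟨(le_div_iff₀ (sub_pos.2 h)).2 h₁, (div_le_iff₀ (sub_pos.2 h)).2 h₂⟩

lemma lo_le_hi (hf : HasSlopesIn f lo hi) : lo ≤ hi :=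
  (hf.slope_mem zero_ne_one).1.trans (hf.slope_mem zero_ne_one).2

lemma mem_Icc_of_hasDerivWithinAt (hf : HasSlopesIn f lo hi) {s : Set ℝ} {x d : ℝ}
    (hx : x ∉ s) [(𝓝[s] x).NeBot] (hd : HasDerivWithinAt f d s x) : d ∈ Set.Icc lo hi :=
  isClosed_Icc.mem_of_tendsto ((hasDerivWithinAt_iff_tendsto_slope' hx).1 hd)
    (eventually_nhdsWithin_of_forall fun _ hy => hf.slope_mem (ne_of_mem_of_not_mem hy hx).symm)

lemma strictAnti (hf : HasSlopesIn f lo hi) (hhi : hi < 0) : StrictAnti f := fun t s hts => by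
  nlinarith [(hf hts.le).2, mul_neg_of_neg_of_pos hhi (sub_pos.2 hts)]

lemma exists_zero {a b : ℝ} (hf : HasSlopesIn f (-b) (-a)) (hfc : Continuous f) (ha : 0 < a)
    (h0 : f 0 < 0) : ∃ z, f z = 0 ∧ f 0 / a ≤ z ∧ z ≤ f 0 / b := by
  have hab : a ≤ b := neg_le_neg_iff.1 hf.lo_le_hi
  have hτ : f 0 / a ≤ 0 := div_nonpos_of_nonpos_of_nonneg h0.le ha.le
  have hσ : f 0 / b ≤ 0 := div_nonpos_of_nonpos_of_nonneg h0.le (ha.le.trans hab)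
  have hfτ : 0 ≤ f (f 0 / a) := by
    have := (hf hτ).2
    rw [zero_sub, neg_mul_neg, mul_div_cancel₀ _ ha.ne'] at this
    linarith
  have hfσ : f (f 0 / b) ≤ 0 := by
    have := (hf hσ).1
    rw [zero_sub, neg_mul_neg, mul_div_cancel₀ _ (ha.trans_le hab).ne'] at this
    linarith
  have hτσ : f 0 / a ≤ f 0 / b := by
    rw [div_le_div_iff₀ ha (ha.trans_le hab)]
    nlinarith
  obtain ⟨z, hz, hfz⟩ := intermediate_value_Icc' hτσ hfc.continuousOn ⟨hfσ, hfτ⟩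
  exact ⟨z, hfz, hz.1, hz.2⟩

end HasSlopesIn

theorem hasSlopesIn_log_sum_exp {ι : Type*} {s : Finset ι} (hs : s.Nonempty) {c : ι → ℝ}
    {lo hi : ℝ} (hc : ∀ i ∈ s, lo ≤ c i ∧ c i ≤ hi) :
    HasSlopesIn (fun t => Real.log (∑ i ∈ s, Real.exp (t * c i))) lo hi := by
  intro t u htu
  have hZ : ∀ r, 0 < ∑ i ∈ s, Real.exp (r * c i) := fun r =>
    sum_pos (fun _ _ => Real.exp_pos _) hs
  have hsplit : ∀ i, Real.exp (u * c i) = Real.exp ((u - t) * c i) * Real.exp (t * c i) :=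
    fun i => by rw [← Real.exp_add]; ring_nf
  constructor
  · rw [le_sub_iff_add_le, ← Real.log_exp (lo * (u - t)),
      ← Real.log_mul (by positivity) (hZ t).ne']
    refine Real.log_le_log (by positivity) ?_
    rw [Finset.mul_sum]
    gcongr with i hmem
    rw [hsplit]
    refine mul_le_mul_of_nonneg_right (Real.exp_le_exp.2 ?_) (Real.exp_pos _).le
    nlinarith [(hc i hmem).1]
  · rw [sub_le_iff_le_add, ← Real.log_exp (hi * (u - t)),
      ← Real.log_mul (by positivity) (hZ t).ne']
    refine Real.log_le_log (hZ u) ?_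
    rw [Finset.mul_sum]
    gcongr with i hmem
    rw [hsplit]
    refine mul_le_mul_of_nonneg_right (Real.exp_le_exp.2 ?_) (Real.exp_pos _).le
    nlinarith [(hc i hmem).2]

lemma not_differentiableAt_of_hasDerivWithinAt_Iio_Ioi {f : ℝ → ℝ} {x d₁ d₂ : ℝ}
    (h₁ : HasDerivWithinAt f d₁ (Set.Iio x) x) (h₂ : HasDerivWithinAt f d₂ (Set.Ioi x) x)
    (hne : d₁ ≠ d₂) : ¬DifferentiableAt ℝ f x := fun hd =>
  hne <| ((uniqueDiffWithinAt_Iio x).eq_deriv _ h₁ hd.hasDerivAt.hasDerivWithinAt).trans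
    ((uniqueDiffWithinAt_Ioi x).eq_deriv _ hd.hasDerivAt.hasDerivWithinAt h₂)

lemma ciSup_subtype_eq_of_forall_le {ι : Type*} {s : Set ι} {f : ι → ℝ} {i : ι} (hi : i ∈ s)
    (h : ∀ j ∈ s, f j ≤ f i) : ⨆ j : s, f j = f i :=
  have : Nonempty s := ⟨⟨i, hi⟩⟩
  le_antisymm (ciSup_le fun j => h j j.2)
    (le_ciSup (f := fun j : s => f j) ⟨f i, Set.forall_mem_range.2 fun j => h j j.2⟩ ⟨i, hi⟩)

lemma sum_range_bounds_of_window {u : ℤ → ℝ} {M a b : ℝ} {L : ℕ} (hL : 0 < L)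
    (hu : ∀ m, 0 ≤ u m ∧ u m ≤ M)
    (hwin : ∀ m, L * a ≤ ∑ r ∈ range L, u (m + r) ∧ ∑ r ∈ range L, u (m + r) ≤ L * b)
    (m : ℤ) (n : ℕ) :
    n * a - L * M ≤ ∑ r ∈ range n, u (m + r) ∧ ∑ r ∈ range n, u (m + r) ≤ n * b + L * M := by
  have hsum : ∀ m n, 0 ≤ ∑ r ∈ range n, u (m + r) ∧ ∑ r ∈ range n, u (m + r) ≤ n * M :=
    fun m n => ⟨sum_nonneg fun r _ => (hu _).1,
      by simpa using sum_le_card_nsmul (range n) _ _ fun r _ => (hu (m + r)).2⟩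
  have hM : 0 ≤ M := (hu 0).1.trans (hu 0).2
  have hL' : (0 : ℝ) < L := by exact_mod_cast hL
  have haM : a ≤ M := le_of_mul_le_mul_left ((hwin 0).1.trans (hsum 0 L).2) hL'
  have hb : 0 ≤ b := nonneg_of_mul_nonneg_right ((hsum 0 L).1.trans (hwin 0).2) hL'
  induction n using Nat.strong_induction_on generalizing m with
  | _ n ih =>
  rcases lt_or_ge n L with hn | hn
  · obtain ⟨h₀, h₁⟩ := hsum m n
    have hnL : (n : ℝ) ≤ L := by exact_mod_cast hn.le
    constructor <;> nlinarith [mul_le_mul_of_nonneg_left haM (Nat.cast_nonneg (α := ℝ) n),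
      mul_le_mul_of_nonneg_right hnL hM, mul_nonneg (Nat.cast_nonneg (α := ℝ) n) hb]
  · obtain ⟨k, rfl⟩ := Nat.exists_eq_add_of_le hn
    obtain ⟨h₀, h₁⟩ := ih k (by omega) (m + L)
    obtain ⟨h₂, h₃⟩ := hwin m
    simp only [sum_range_add, Nat.cast_add, ← add_assoc] at h₀ h₁ ⊢
    constructor <;> linarith

lemma zwinCount_add (ξ : ℤ → Bool) (m : ℤ) (a b : ℕ) :
    zwinCount ξ m (a + b) = zwinCount ξ m a + zwinCount ξ (m + a) b := by
  simp only [zwinCount, card_filter, sum_range_add, Nat.cast_add, add_assoc]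

lemma zwinCount_le (ξ : ℤ → Bool) (m : ℤ) (L : ℕ) : zwinCount ξ m L ≤ L :=
  (card_filter_le _ _).trans (card_range L).le

lemma zwinCount_eq_of_periodic {ξ : ℤ → Bool} {L : ℕ} (hξ : ∀ n, ξ (n + L) = ξ n) (m : ℤ) :
    zwinCount ξ m L = zwinCount ξ 0 L := by
  have hstep : ∀ m, zwinCount ξ (m + 1) L = zwinCount ξ m L := fun m => by
    have h₁ := zwinCount_add ξ m 1 L
    have h₂ := zwinCount_add ξ m L 1
    have h₃ : zwinCount ξ (m + L) 1 = zwinCount ξ m 1 := by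
      simp [zwinCount, filter_singleton, hξ]
    rw [add_comm 1 L] at h₁
    push_cast at h₁
    omega
  induction m using Int.induction_on with
  | zero => rfl
  | succ m ih => rw [hstep, ih]
  | pred m ih => rw [← ih, ← hstep, sub_add_cancel]

lemma Hset_nonempty {i j L : ℕ} (hij : i ≤ j) (hjL : j ≤ L) : (Hset i j L).Nonempty := by
  set ξ : ℤ → Bool := fun n => decide (n % L < j)
  have hper : ∀ n, ξ (n + L) = ξ n := fun n => by simp [ξ]
  have hcount : zwinCount ξ 0 L = j := by
    have : (range L).filter (fun r : ℕ => ξ (0 + r) = true) = range j := by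
      ext r
      simp only [mem_filter, mem_range, zero_add, ξ, decide_eq_true_eq]
      constructor
      · rintro ⟨hr, h⟩
        rw [Int.emod_eq_of_lt (by positivity) (by exact_mod_cast hr)] at h
        exact_mod_cast h
      · intro hr
        have hrL : r < L := hr.trans_le hjL
        refine ⟨hrL, ?_⟩
        rw [Int.emod_eq_of_lt (by positivity) (by exact_mod_cast hrL)]
        exact_mod_cast hr
    rw [zwinCount, this, card_range]
  exact ⟨ξ, fun m => by rw [zwinCount_eq_of_periodic hper, hcount]; exact ⟨hij, le_rfl⟩⟩

/-- `-φ` at a point whose zeroth symbol is `b`. -/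
noncomputable def symbolWeight (β₀ β₂ : ℝ) (b : Bool) : ℝ :=
  if b then Real.log β₂ else Real.log β₀

noncomputable def wordWeight (β₀ β₂ : ℝ) {n : ℕ} (w : Fin n → Bool) : ℝ :=
  ∑ r, symbolWeight β₀ β₂ (w r)

section Pressure

variable {β₀ β₂ : ℝ} {X : Set (ℤ → Bool)}

lemma exp_wordWeight (hβ₀ : 0 < β₀) (hβ₂ : 0 < β₂) {n : ℕ} (w : Fin n → Bool) :
    Real.exp (wordWeight β₀ β₂ w) = β₀ ^ #{r | w r = false} * β₂ ^ #{r | w r = true} := by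
  simp only [wordWeight, symbolWeight, Real.exp_sum, apply_ite Real.exp, Real.exp_log hβ₀,
    Real.exp_log hβ₂, prod_ite, prod_const]
  simp [mul_comm]

open Classical in
lemma Zfun_eq_sum_exp (hβ₀ : 0 < β₀) (hβ₂ : 0 < β₂) (t : ℝ) (n : ℕ) :
    Zfun β₀ β₂ X t n =
      ∑ w : Fin n → Bool, if WordOccurs X w then Real.exp (-t * wordWeight β₀ β₂ w) else 0 := by
  refine sum_congr rfl fun w _ => ?_
  rw [← exp_wordWeight hβ₀ hβ₂, ← Real.exp_mul, mul_comm]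

lemma WordOccurs.of_append {a b : ℕ} {u : Fin a → Bool} {v : Fin b → Bool}
    (h : WordOccurs X (Fin.append u v)) : WordOccurs X u ∧ WordOccurs X v := by
  obtain ⟨ξ, hξ, m, hm⟩ := h
  refine ⟨⟨ξ, hξ, m, fun r => by simpa using hm (Fin.castAdd b r)⟩,
    ⟨ξ, hξ, m + a, fun r => ?_⟩⟩
  simpa [add_assoc] using hm (Fin.natAdd a r)

lemma wordWeight_append {a b : ℕ} (u : Fin a → Bool) (v : Fin b → Bool) :
    wordWeight β₀ β₂ (Fin.append u v) = wordWeight β₀ β₂ u + wordWeight β₀ β₂ v := by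
  simp [wordWeight, Fin.sum_univ_add]

open Classical in
lemma Zfun_add_le (hβ₀ : 0 < β₀) (hβ₂ : 0 < β₂) (t : ℝ) (a b : ℕ) :
    Zfun β₀ β₂ X t (a + b) ≤ Zfun β₀ β₂ X t a * Zfun β₀ β₂ X t b := by
  simp only [Zfun_eq_sum_exp hβ₀ hβ₂, sum_mul_sum, ← Fintype.sum_prod_type']
  rw [← (Fin.appendEquiv a b).sum_comp]
  refine sum_le_sum fun ⟨u, v⟩ _ => ?_
  rw [show Fin.appendEquiv a b (u, v) = Fin.append u v from rfl]
  by_cases h : WordOccurs X (Fin.append u v)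
  · obtain ⟨hu, hv⟩ := h.of_append
    rw [if_pos h, if_pos hu, if_pos hv, wordWeight_append, mul_add, Real.exp_add]
  · rw [if_neg h]
    positivity

lemma Zfun_pos (hβ₀ : 0 < β₀) (hβ₂ : 0 < β₂) (hX : X.Nonempty) (t : ℝ) (n : ℕ) :
    0 < Zfun β₀ β₂ X t n := by
  classical
  obtain ⟨ξ, hξ⟩ := hX
  rw [Zfun_eq_sum_exp hβ₀ hβ₂]
  refine sum_pos' (fun w _ => by positivity) ⟨fun r => ξ r, mem_univ _, ?_⟩
  rw [if_pos ⟨ξ, hξ, 0, fun r => by simp⟩]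
  positivity

lemma abs_wordWeight_le {n : ℕ} (w : Fin n → Bool) :
    |wordWeight β₀ β₂ w| ≤ n * (|Real.log β₀| + |Real.log β₂|) := by
  calc |wordWeight β₀ β₂ w| ≤ ∑ r, |symbolWeight β₀ β₂ (w r)| := abs_sum_le_sum_abs _ _
    _ ≤ ∑ _r : Fin n, (|Real.log β₀| + |Real.log β₂|) := by
        gcongr with r
        unfold symbolWeight
        split_ifs <;> simp
    _ = n * (|Real.log β₀| + |Real.log β₂|) := by simp [mul_add]

lemma neg_le_log_Zfun_div (hβ₀ : 0 < β₀) (hβ₂ : 0 < β₂) (hX : X.Nonempty) (t : ℝ) (n : ℕ) :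
    -(|t| * (|Real.log β₀| + |Real.log β₂|)) ≤ Real.log (Zfun β₀ β₂ X t n) / n := by
  classical
  rcases Nat.eq_zero_or_pos n with rfl | hn
  · simp only [CharP.cast_eq_zero, div_zero, neg_nonpos]
    positivity
  obtain ⟨ξ, hξ⟩ := hX
  set w : Fin n → Bool := fun r => ξ r
  have hterm : Real.exp (-t * wordWeight β₀ β₂ w) ≤ Zfun β₀ β₂ X t n := by
    rw [Zfun_eq_sum_exp hβ₀ hβ₂]
    refine le_of_eq_of_le ?_ (single_le_sum (fun w _ => by positivity) (mem_univ w))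
    rw [if_pos ⟨ξ, hξ, 0, fun r => by simp [w]⟩]
  have hlog : -t * wordWeight β₀ β₂ w ≤ Real.log (Zfun β₀ β₂ X t n) := by
    simpa using Real.log_le_log (Real.exp_pos _) hterm
  rw [le_div_iff₀ (by exact_mod_cast hn)]
  calc -(|t| * (|Real.log β₀| + |Real.log β₂|)) * n
      = -(|t| * (n * (|Real.log β₀| + |Real.log β₂|))) := by ring
    _ ≤ -|t * wordWeight β₀ β₂ w| := by
        rw [abs_mul]
        gcongr
        exact abs_wordWeight_le w
    _ ≤ -t * wordWeight β₀ β₂ w := by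
        rw [neg_mul, neg_le_neg_iff]
        exact le_abs_self _
    _ ≤ _ := hlog

theorem tendsto_log_Zfun_div (hβ₀ : 0 < β₀) (hβ₂ : 0 < β₂) (hX : X.Nonempty) (t : ℝ) :
    Tendsto (fun n : ℕ => Real.log (Zfun β₀ β₂ X t n) / n) atTop
      (𝓝 (pressureOf β₀ β₂ X t)) := by
  have hsub : Subadditive fun n => Real.log (Zfun β₀ β₂ X t n) := fun a b => by
    rw [← Real.log_mul (Zfun_pos hβ₀ hβ₂ hX t a).ne' (Zfun_pos hβ₀ hβ₂ hX t b).ne']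
    exact Real.log_le_log (Zfun_pos hβ₀ hβ₂ hX t _) (Zfun_add_le hβ₀ hβ₂ t a b)
  have hlim := hsub.tendsto_lim ⟨_, Set.forall_mem_range.2 (neg_le_log_Zfun_div hβ₀ hβ₂ hX t)⟩
  rwa [pressureOf, hlim.limUnder_eq]

theorem convexOn_pressureOf (hβ₀ : 0 < β₀) (hβ₂ : 0 < β₂) (hX : X.Nonempty) :
    ConvexOn ℝ Set.univ (pressureOf β₀ β₂ X) := by
  classical
  refine ConvexOn.of_tendsto convex_univ (Eventually.of_forall fun n => ?_)
    (fun t _ => tendsto_log_Zfun_div hβ₀ hβ₂ hX t)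
  simp only [Zfun_eq_sum_exp hβ₀ hβ₂, ← sum_filter, neg_mul_comm, div_eq_inv_mul]
  exact (convexOn_log_sum_exp _ _).smul (by positivity)

theorem hasSlopesIn_pressureOf (hβ₀ : 0 < β₀) (hβ₂ : 0 < β₂) (hX : X.Nonempty) {a b C : ℝ}
    (hW : ∀ n (w : Fin n → Bool), WordOccurs X w →
      n * a - C ≤ wordWeight β₀ β₂ w ∧ wordWeight β₀ β₂ w ≤ n * b + C) :
    HasSlopesIn (pressureOf β₀ β₂ X) (-b) (-a) := by
  classical
  refine HasSlopesIn.of_tendsto (lo' := fun n : ℕ => (-C + -b * n) / n)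
    (hi' := fun n : ℕ => (C + -a * n) / n) ?_ ?_ ?_ (tendsto_log_Zfun_div hβ₀ hβ₂ hX)
  · filter_upwards [eventually_gt_atTop 0] with n hn
    obtain ⟨ξ, hξ⟩ := hX
    have hne : ({w : Fin n → Bool | WordOccurs X w} : Finset _).Nonempty :=
      ⟨fun r => ξ r, by simpa using ⟨ξ, hξ, 0, fun r => by simp⟩⟩
    have := (hasSlopesIn_log_sum_exp hne (c := fun w => -wordWeight β₀ β₂ w)
      (lo := -C + -b * n) (hi := C + -a * n) fun w hw => ?_).div_const (c := n) (by positivity)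
    · simpa only [Zfun_eq_sum_exp hβ₀ hβ₂, ← sum_filter, neg_mul_comm] using this
    · have := hW n w (by simpa using hw)
      constructor <;> linarith
  · simpa using tendsto_add_mul_div_add_mul_atTop_nhds (-C) 0 (-b) one_ne_zero
  · simpa using tendsto_add_mul_div_add_mul_atTop_nhds C 0 (-a) one_ne_zero

end Pressure

/-- The paper's `a_ℓ⁻ = avgWeight (j ℓ) (L ℓ)` and `a_ℓ⁺ = avgWeight (i ℓ) (L ℓ)`: the average of
`-φ` over a window of length `L` containing `c` symbols `2`. -/
noncomputable def avgWeight (β₀ β₂ : ℝ) (c L : ℕ) : ℝ :=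
  ((c : ℝ) * Real.log β₂ + ((L - c : ℕ) : ℝ) * Real.log β₀) / L

section Hset

variable {β₀ β₂ : ℝ} {i j L : ℕ}

lemma mul_avgWeight {c : ℕ} (hc : c ≤ L) :
    L * avgWeight β₀ β₂ c L = L * Real.log β₀ - c * (Real.log β₀ - Real.log β₂) := by
  rcases Nat.eq_zero_or_pos L with rfl | hL
  · simp [Nat.le_zero.1 hc]
  rw [avgWeight, mul_div_cancel₀ _ (by positivity), Nat.cast_sub hc]
  ring

lemma sum_symbolWeight_range (ξ : ℤ → Bool) (m : ℤ) (L : ℕ) :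
    ∑ r ∈ range L, symbolWeight β₀ β₂ (ξ (m + r)) =
      L * Real.log β₀ - zwinCount ξ m L * (Real.log β₀ - Real.log β₂) := by
  have hcard := card_filter_add_card_filter_not (s := range L)
    (p := fun r : ℕ => ξ (m + r) = true)
  simp only [card_range, Bool.not_eq_true] at hcard
  replace hcard := congrArg (Nat.cast (R := ℝ)) hcard
  simp only [symbolWeight, sum_ite, sum_const, nsmul_eq_mul, zwinCount, Bool.not_eq_true]
  rw [← hcard, Nat.cast_add]
  ring

lemma symbolWeight_mem_Icc (hβ₂ : 1 ≤ β₂) (hβ : β₂ ≤ β₀) (b : Bool) :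
    0 ≤ symbolWeight β₀ β₂ b ∧ symbolWeight β₀ β₂ b ≤ Real.log β₀ := by
  have h₂ := Real.log_nonneg hβ₂
  have h₂₀ := Real.log_le_log (by linarith) hβ
  cases b <;> simp only [symbolWeight, Bool.false_eq_true, if_true, if_false] <;>
    constructor <;> linarith

lemma wordWeight_eq_sum_range {n : ℕ} {w : Fin n → Bool} {ξ : ℤ → Bool} {m : ℤ}
    (hm : ∀ r : Fin n, w r = ξ (m + r)) :
    wordWeight β₀ β₂ w = ∑ r ∈ range n, symbolWeight β₀ β₂ (ξ (m + r)) := by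
  simp only [wordWeight, hm]
  exact Fin.sum_univ_eq_sum_range (fun r => symbolWeight β₀ β₂ (ξ (m + r))) n

lemma sum_symbolWeight_mem_of_mem_Hset (hβ₂ : 0 < β₂) (hβ : β₂ ≤ β₀) (hjL : j ≤ L)
    {ξ : ℤ → Bool} (hξ : ξ ∈ Hset i j L) (m : ℤ) :
    L * avgWeight β₀ β₂ j L ≤ ∑ r ∈ range L, symbolWeight β₀ β₂ (ξ (m + r)) ∧
      ∑ r ∈ range L, symbolWeight β₀ β₂ (ξ (m + r)) ≤ L * avgWeight β₀ β₂ i L := by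
  obtain ⟨hi, hj⟩ := hξ m
  have hδ : 0 ≤ Real.log β₀ - Real.log β₂ := sub_nonneg.2 (Real.log_le_log hβ₂ hβ)
  rw [sum_symbolWeight_range, mul_avgWeight hjL, mul_avgWeight (hi.trans (zwinCount_le ξ m L))]
  constructor <;> gcongr

theorem hasSlopesIn_pressure_Hset (hβ₂ : 1 ≤ β₂) (hβ : β₂ ≤ β₀) (hL : 0 < L) (hij : i ≤ j)
    (hjL : j ≤ L) :
    HasSlopesIn (pressureOf β₀ β₂ (Hset i j L)) (-avgWeight β₀ β₂ i L)
      (-avgWeight β₀ β₂ j L) := by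
  have hβ₂' : 0 < β₂ := by linarith
  refine hasSlopesIn_pressureOf (C := L * Real.log β₀) (hβ₂'.trans_le hβ) hβ₂'
    (Hset_nonempty hij hjL) fun n w ⟨ξ, hξ, m, hm⟩ => ?_
  rw [wordWeight_eq_sum_range hm]
  exact sum_range_bounds_of_window hL (fun m => symbolWeight_mem_Icc hβ₂ hβ (ξ m))
    (sum_symbolWeight_mem_of_mem_Hset hβ₂' hβ hjL hξ) m n

end Hset

structure IsCrossingSeq (k : ℕ) (P : ℕ → ℝ → ℝ) (T : ℕ → ℝ) : Prop where
  T_succ_lt : ∀ p, 1 ≤ p → p + 1 < k → T (p + 1) < T p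
  eq_at_T : ∀ p, 1 ≤ p → p < k → P (p + 1) (T p) = P p (T p)
  lt_right : ∀ p, 1 ≤ p → p < k → ∀ t, T p < t → P (p + 1) t < P p t
  lt_left : ∀ p, 1 ≤ p → p < k → ∀ t, t < T p → P p t < P (p + 1) t

theorem exists_isCrossingSeq {k : ℕ} {P : ℕ → ℝ → ℝ} {am ap : ℕ → ℝ}
    (hcont : ∀ ℓ, 1 ≤ ℓ → ℓ ≤ k → Continuous (P ℓ))
    (hslope : ∀ ℓ, 1 ≤ ℓ → ℓ ≤ k → HasSlopesIn (P ℓ) (-ap ℓ) (-am ℓ))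
    (h0 : ∀ ℓ, 1 ≤ ℓ → ℓ < k → P (ℓ + 1) 0 < P ℓ 0)
    (hgap : ∀ ℓ, 1 ≤ ℓ → ℓ < k → ap ℓ < am (ℓ + 1))
    (hτ : ∀ ℓ, 1 ≤ ℓ → ℓ + 1 < k →
      (P (ℓ + 2) 0 - P (ℓ + 1) 0) / (ap (ℓ + 2) - am (ℓ + 1)) <
        (P (ℓ + 1) 0 - P ℓ 0) / (am (ℓ + 1) - ap ℓ)) :
    ∃ T, IsCrossingSeq k P T ∧ ∀ ℓ, 1 ≤ ℓ → ℓ < k → T ℓ < 0 := by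
  have hpair : ∀ ℓ, 1 ≤ ℓ → ℓ < k → ∃ z, (P (ℓ + 1) - P ℓ) z = 0 ∧
      (P (ℓ + 1) 0 - P ℓ 0) / (am (ℓ + 1) - ap ℓ) ≤ z ∧
      z ≤ (P (ℓ + 1) 0 - P ℓ 0) / (ap (ℓ + 1) - am ℓ) ∧ StrictAnti (P (ℓ + 1) - P ℓ) := by
    intro ℓ h₁ h₂
    have hd : HasSlopesIn (P (ℓ + 1) - P ℓ) (-(ap (ℓ + 1) - am ℓ)) (-(am (ℓ + 1) - ap ℓ)) := by
      simpa only [neg_sub_neg, neg_sub] using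
        (hslope (ℓ + 1) (by omega) h₂).sub (hslope ℓ h₁ h₂.le)
    have hgap' : 0 < am (ℓ + 1) - ap ℓ := sub_pos.2 (hgap ℓ h₁ h₂)
    obtain ⟨z, hz⟩ := hd.exists_zero ((hcont _ (by omega) h₂).sub (hcont ℓ h₁ h₂.le)) hgap'
      (sub_neg.2 (h0 ℓ h₁ h₂))
    exact ⟨z, hz.1, hz.2.1, hz.2.2, hd.strictAnti (neg_neg_of_pos hgap')⟩
  choose! T hTzero hTlo hThi hanti using hpair
  have hright : ∀ p, 1 ≤ p → p < k → ∀ t, T p < t → P (p + 1) t < P p t := fun p h₁ h₂ t ht =>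
    sub_neg.1 ((hanti p h₁ h₂ ht).trans_eq (hTzero p h₁ h₂))
  refine ⟨T, ⟨fun p h₁ h₂ => ?_, fun p h₁ h₂ => sub_eq_zero.1 (hTzero p h₁ h₂), hright,
    fun p h₁ h₂ t ht => sub_pos.1 ((hTzero p h₁ h₂).symm.trans_lt (hanti p h₁ h₂ ht))⟩,
    fun ℓ h₁ h₂ => ?_⟩
  · exact (hThi (p + 1) (by omega) h₂).trans_lt ((hτ p h₁ h₂).trans_le (hTlo p h₁ (by omega)))
  · exact StrictAnti.lt_iff_gt (hanti ℓ h₁ h₂) |>.1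
      ((sub_neg.2 (h0 ℓ h₁ h₂)).trans_eq (hTzero ℓ h₁ h₂).symm)

namespace IsCrossingSeq

variable {k : ℕ} {P : ℕ → ℝ → ℝ} {T : ℕ → ℝ}

lemma T_le_T (hc : IsCrossingSeq k P T) {p q : ℕ} (hp : 1 ≤ p) (hpq : p ≤ q) (hq : q < k) :
    T q ≤ T p := by
  induction q, hpq using Nat.le_induction with
  | base => exact le_rfl
  | succ q hpq ih => exact (hc.T_succ_lt q (hp.trans hpq) hq).le.trans (ih (by omega))

lemma lt_of_lt_of_T_lt (hc : IsCrossingSeq k P T) {ℓ m : ℕ} {t : ℝ} (hℓ : 1 ≤ ℓ) (hℓm : ℓ < m)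
    (hm : m ≤ k) (ht : T ℓ < t) : P m t < P ℓ t := by
  induction m, hℓm using Nat.le_induction with
  | base => exact hc.lt_right ℓ hℓ hm t ht
  | succ m hℓm ih =>
    exact (hc.lt_right m (by omega) hm t ((hc.T_le_T hℓ (by omega) (by omega)).trans_lt ht)).trans
      (ih (by omega))

lemma lt_succ_of_le_of_lt_T (hc : IsCrossingSeq k P T) {m p : ℕ} {t : ℝ} (hm : 1 ≤ m)
    (hmp : m ≤ p) (hp : p < k) (ht : t < T p) : P m t < P (p + 1) t := by
  induction p, hmp using Nat.le_induction with
  | base => exact hc.lt_left m hm hp t ht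
  | succ p hmp ih =>
    exact (ih (by omega) (ht.trans_le (hc.T_succ_lt p (hm.trans hmp) hp).le)).trans
      (hc.lt_left (p + 1) (by omega) hp t ht)

lemma lt_of_ne (hc : IsCrossingSeq k P T) {ℓ m : ℕ} {t : ℝ} (hℓ : 1 ≤ ℓ) (hℓk : ℓ ≤ k)
    (hlo : ℓ < k → T ℓ < t) (hhi : 1 < ℓ → t < T (ℓ - 1)) (hm : 1 ≤ m) (hmk : m ≤ k)
    (hmℓ : m ≠ ℓ) : P m t < P ℓ t := by
  rcases hmℓ.lt_or_gt with hmℓ | hℓm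
  · obtain ⟨p, rfl⟩ : ∃ p, ℓ = p + 1 := ⟨ℓ - 1, by omega⟩
    exact hc.lt_succ_of_le_of_lt_T hm (by omega) (by omega) (hhi (by omega))
  · exact hc.lt_of_lt_of_T_lt hℓ hℓm hmk (hlo (by omega))

lemma iSup_eq (hc : IsCrossingSeq k P T) {ℓ : ℕ} {t : ℝ} (hℓ : 1 ≤ ℓ) (hℓk : ℓ ≤ k)
    (hlo : ℓ < k → T ℓ < t) (hhi : 1 < ℓ → t < T (ℓ - 1)) :
    ⨆ m : (Set.Icc 1 k : Set ℕ), P m t = P ℓ t ∧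
      ∀ m, 1 ≤ m → m ≤ k → m ≠ ℓ → P m t < P ℓ t := by
  have hlt := fun m hm hmk hmℓ => hc.lt_of_ne (t := t) hℓ hℓk hlo hhi (m := m) hm hmk hmℓ
  refine ⟨ciSup_subtype_eq_of_forall_le (f := (P · t)) (Set.mem_Icc.2 ⟨hℓ, hℓk⟩) fun m hm => ?_,
    hlt⟩
  obtain ⟨hm, hmk⟩ := Set.mem_Icc.1 hm
  rcases eq_or_ne m ℓ with rfl | hmℓ
  exacts [le_rfl, (hlt m hm hmk hmℓ).le]

lemma iSup_eq_at_T (hc : IsCrossingSeq k P T) {ℓ : ℕ} (hℓ : 1 ≤ ℓ) (hℓk : ℓ < k) :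
    ⨆ m : (Set.Icc 1 k : Set ℕ), P m (T ℓ) = P ℓ (T ℓ) := by
  refine ciSup_subtype_eq_of_forall_le (f := (P · (T ℓ))) (Set.mem_Icc.2 ⟨hℓ, hℓk.le⟩)
    fun m hm => ?_
  obtain ⟨hm, hmk⟩ := Set.mem_Icc.1 hm
  rcases lt_trichotomy m (ℓ + 1) with hmℓ | rfl | hℓm
  · rcases (Nat.lt_succ_iff.1 hmℓ).eq_or_lt with rfl | hmℓ
    · exact le_rfl
    obtain ⟨p, rfl⟩ : ∃ p, ℓ = p + 1 := ⟨ℓ - 1, by omega⟩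
    exact (hc.lt_succ_of_le_of_lt_T hm (by omega) (by omega)
      (hc.T_succ_lt p (by omega) hℓk)).le
  · exact (hc.eq_at_T ℓ hℓ hℓk).le
  · exact ((hc.lt_of_lt_of_T_lt (by omega) hℓm hmk (hc.T_succ_lt ℓ hℓ (by omega))).trans_eq
      (hc.eq_at_T ℓ hℓ hℓk)).le

lemma iSup_eventuallyEq_nhdsGT (hc : IsCrossingSeq k P T) {ℓ : ℕ} (hℓ : 1 ≤ ℓ) (hℓk : ℓ < k) :
    (fun t => ⨆ m : (Set.Icc 1 k : Set ℕ), P m t) =ᶠ[𝓝[>] T ℓ] P ℓ := by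
  have hhi : ∀ᶠ t in 𝓝[>] T ℓ, 1 < ℓ → t < T (ℓ - 1) := by
    by_cases h : 1 < ℓ
    · have hT := hc.T_succ_lt (ℓ - 1) (by omega) (by omega)
      rw [Nat.sub_add_cancel hℓ] at hT
      filter_upwards [nhdsWithin_le_nhds (eventually_lt_nhds hT)] with t ht using fun _ => ht
    · exact Eventually.of_forall fun _ h' => absurd h' h
  filter_upwards [self_mem_nhdsWithin, hhi] with t ht hhi
  exact (hc.iSup_eq hℓ hℓk.le (fun _ => ht) hhi).1

lemma iSup_eventuallyEq_nhdsLT (hc : IsCrossingSeq k P T) {ℓ : ℕ} (hℓ : 1 ≤ ℓ) (hℓk : ℓ < k) :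
    (fun t => ⨆ m : (Set.Icc 1 k : Set ℕ), P m t) =ᶠ[𝓝[<] T ℓ] P (ℓ + 1) := by
  have hlo : ∀ᶠ t in 𝓝[<] T ℓ, ℓ + 1 < k → T (ℓ + 1) < t := by
    by_cases h : ℓ + 1 < k
    · filter_upwards [nhdsWithin_le_nhds (eventually_gt_nhds (hc.T_succ_lt ℓ hℓ h))] with t ht
        using fun _ => ht
    · exact Eventually.of_forall fun _ h' => absurd h' h
  filter_upwards [self_mem_nhdsWithin, hlo] with t ht hlo
  exact (hc.iSup_eq (by omega) hℓk hlo fun _ => ht).1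

lemma exists_hasDerivWithinAt_iSup {am ap : ℕ → ℝ} (hc : IsCrossingSeq k P T)
    (hconv : ∀ ℓ, 1 ≤ ℓ → ℓ ≤ k → ConvexOn ℝ Set.univ (P ℓ))
    (hslope : ∀ ℓ, 1 ≤ ℓ → ℓ ≤ k → HasSlopesIn (P ℓ) (-ap ℓ) (-am ℓ)) {ℓ : ℕ} (hℓ : 1 ≤ ℓ)
    (hℓk : ℓ < k) :
    ∃ Dm Dp : ℝ,
      HasDerivWithinAt (fun t => ⨆ m : (Set.Icc 1 k : Set ℕ), P m t) Dm (Set.Iio (T ℓ)) (T ℓ) ∧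
      HasDerivWithinAt (fun t => ⨆ m : (Set.Icc 1 k : Set ℕ), P m t) Dp (Set.Ioi (T ℓ)) (T ℓ) ∧
      Dm ≤ -am (ℓ + 1) ∧ -ap ℓ ≤ Dp := by
  have hl := (hconv (ℓ + 1) (by omega) hℓk).hasDerivWithinAt_leftDeriv_of_mem_interior
    (x := T ℓ) (by simp)
  have hr := (hconv ℓ hℓ hℓk.le).hasDerivWithinAt_rightDeriv_of_mem_interior (x := T ℓ) (by simp)
  refine ⟨_, _, hl.congr_of_eventuallyEq (hc.iSup_eventuallyEq_nhdsLT hℓ hℓk)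
      ((hc.iSup_eq_at_T hℓ hℓk).trans (hc.eq_at_T ℓ hℓ hℓk).symm),
    hr.congr_of_eventuallyEq (hc.iSup_eventuallyEq_nhdsGT hℓ hℓk) (hc.iSup_eq_at_T hℓ hℓk),
    ((hslope (ℓ + 1) (by omega) hℓk).mem_Icc_of_hasDerivWithinAt Set.self_notMem_Iio hl).2,
    ((hslope ℓ hℓ hℓk.le).mem_Icc_of_hasDerivWithinAt Set.self_notMem_Ioi hr).1⟩

end IsCrossingSeq

theorem pressure_phase_transitions_general
    (k : ℕ) (hk : 2 ≤ k) (β₀ β₂ : ℝ) (hβ2 : 1 < β₂) (hβ : β₂ < β₀)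
    (i j L : ℕ → ℕ)
    (hij : ∀ ℓ, 1 ≤ ℓ → ℓ ≤ k → i ℓ < j ℓ ∧ j ℓ ≤ L ℓ)
    (am ap : ℕ → ℝ)
    (ham : ∀ ℓ, am ℓ =
      ((j ℓ : ℝ) * Real.log β₂ + ((L ℓ - j ℓ : ℕ) : ℝ) * Real.log β₀) / (L ℓ : ℝ))
    (hap : ∀ ℓ, ap ℓ =
      ((i ℓ : ℝ) * Real.log β₂ + ((L ℓ - i ℓ : ℕ) : ℝ) * Real.log β₀) / (L ℓ : ℝ))
    (P : ℕ → ℝ → ℝ)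
    (hPdef : ∀ ℓ, P ℓ = pressureOf β₀ β₂ (Hset (i ℓ) (j ℓ) (L ℓ)))
    (hh : ℕ → ℝ) (hhdef : ∀ ℓ, hh ℓ = P ℓ 0)
    (τm τp : ℕ → ℝ)
    (hτm : ∀ ℓ, τm ℓ = -(hh ℓ - hh (ℓ + 1)) / (am (ℓ + 1) - ap ℓ))
    (hτp : ∀ ℓ, τp ℓ = -(hh ℓ - hh (ℓ + 1)) / (ap (ℓ + 1) - am ℓ))
    (hhmono : ∀ ℓ, 1 ≤ ℓ → ℓ < k → hh (ℓ + 1) < hh ℓ)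
    (hamono : ∀ ℓ, 1 ≤ ℓ → ℓ < k → ap ℓ < am (ℓ + 1))
    (hτ : ∀ ℓ, 1 ≤ ℓ → ℓ + 1 < k → τp (ℓ + 1) < τm ℓ)
    (Q : ℝ → ℝ)
    (hQ : ∀ t, Q t = ⨆ ℓ : (Set.Icc 1 k : Set ℕ), P ℓ t) :
    -- the pressures exist
    (∀ ℓ, 1 ≤ ℓ → ℓ ≤ k → ∀ t : ℝ,
      Tendsto (fun n : ℕ => Real.log (Zfun β₀ β₂ (Hset (i ℓ) (j ℓ) (L ℓ)) t n) / n)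
        atTop (nhds (P ℓ t))) ∧
    -- the phase-transition parameters
    ∃ T : ℕ → ℝ,
      (∀ ℓ, 1 ≤ ℓ → ℓ + 1 ≤ k - 1 → T (ℓ + 1) < T ℓ) ∧
      T 1 < 0 ∧
      -- (i)
      (∀ t, T 1 < t →
        Q t = P 1 t ∧ ∀ m, 1 ≤ m → m ≤ k → m ≠ 1 → P m t < P 1 t) ∧
      -- (ii)
      (∀ ℓ, 2 ≤ ℓ → ℓ ≤ k - 1 → ∀ t, T ℓ < t → t < T (ℓ - 1) →
        Q t = P ℓ t ∧ ∀ m, 1 ≤ m → m ≤ k → m ≠ ℓ → P m t < P ℓ t) ∧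
      -- (iii)
      (∀ t, t < T (k - 1) →
        Q t = P k t ∧ ∀ m, 1 ≤ m → m ≤ k → m ≠ k → P m t < P k t) ∧
      -- (iv)
      (∀ ℓ, 1 ≤ ℓ → ℓ ≤ k - 1 →
        ∃ Dm Dp : ℝ,
          HasDerivWithinAt Q Dm (Set.Iio (T ℓ)) (T ℓ) ∧
          HasDerivWithinAt Q Dp (Set.Ioi (T ℓ)) (T ℓ) ∧
          Dm ≤ -(am (ℓ + 1)) ∧ -(am (ℓ + 1)) < -(ap ℓ) ∧ -(ap ℓ) ≤ Dp ∧
          ¬ DifferentiableAt ℝ Q (T ℓ)) := by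
  have hβ₂ : 0 < β₂ := by linarith
  have hβ₀ : 0 < β₀ := by linarith
  have hX : ∀ ℓ, 1 ≤ ℓ → ℓ ≤ k → (Hset (i ℓ) (j ℓ) (L ℓ)).Nonempty := fun ℓ h₁ h₂ =>
    Hset_nonempty (hij ℓ h₁ h₂).1.le (hij ℓ h₁ h₂).2
  have hconv : ∀ ℓ, 1 ≤ ℓ → ℓ ≤ k → ConvexOn ℝ Set.univ (P ℓ) := fun ℓ h₁ h₂ =>
    hPdef ℓ ▸ convexOn_pressureOf hβ₀ hβ₂ (hX ℓ h₁ h₂)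
  have hslope : ∀ ℓ, 1 ≤ ℓ → ℓ ≤ k → HasSlopesIn (P ℓ) (-ap ℓ) (-am ℓ) := fun ℓ h₁ h₂ => by
    obtain ⟨hij', hjL⟩ := hij ℓ h₁ h₂
    rw [hPdef, ham, hap]
    exact hasSlopesIn_pressure_Hset hβ2.le hβ.le (by omega) hij'.le hjL
  obtain ⟨T, hc, hneg⟩ := exists_isCrossingSeq
    (fun ℓ h₁ h₂ => continuousOn_univ.1 ((hconv ℓ h₁ h₂).continuousOn isOpen_univ)) hslope
    (fun ℓ h₁ h₂ => by simpa only [hhdef] using hhmono ℓ h₁ h₂) hamono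
    (fun ℓ h₁ h₂ => by simpa only [hτm, hτp, hhdef, neg_sub] using hτ ℓ h₁ h₂)
  obtain rfl : Q = _ := funext hQ
  refine ⟨fun ℓ h₁ h₂ t => hPdef ℓ ▸ tendsto_log_Zfun_div hβ₀ hβ₂ (hX ℓ h₁ h₂) t, T,
    fun ℓ h₁ h₂ => hc.T_succ_lt ℓ h₁ (by omega), hneg 1 le_rfl (by omega),
    fun t ht => hc.iSup_eq le_rfl (by omega) (fun _ => ht) (fun h => (lt_irrefl 1 h).elim),
    fun ℓ h₁ h₂ t ht₁ ht₂ => hc.iSup_eq (by omega) (by omega) (fun _ => ht₁) (fun _ => ht₂),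
    fun t ht => hc.iSup_eq (by omega) le_rfl (fun h => (lt_irrefl k h).elim) (fun _ => ht),
    fun ℓ h₁ h₂ => ?_⟩
  obtain ⟨Dm, Dp, hm, hp, hDm, hDp⟩ := hc.exists_hasDerivWithinAt_iSup hconv hslope h₁ (by omega)
  have hgap : -am (ℓ + 1) < -ap ℓ := neg_lt_neg (hamono ℓ h₁ (by omega))
  exact ⟨Dm, Dp, hm, hp, hDm, hgap, hDp,
    not_differentiableAt_of_hasDerivWithinAt_Iio_Ioi hm hp (by linarith)⟩

/-- Proposition `p:main`: under the cone hypotheses on the subshifts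
`H_ℓ = H(i_ℓ,j_ℓ,L_ℓ)` — entropies strictly decreasing, slope intervals pairwise
disjoint and crossing intervals ordered — the pressures `P_ℓ(t)` exist, and there are
parameters `t_{k-1} < ⋯ < t₁ < 0` such that `ℙ = max_ℓ P_ℓ` equals the (strictly
maximal) pressure `P_ℓ` on each interval of the induced partition, and at each `t_ℓ`
the one-sided derivatives of `ℙ` satisfy `D⁻ℙ(t_ℓ) ≤ −a_{ℓ+1}⁻ < −a_ℓ⁺ ≤ D⁺ℙ(t_ℓ)`;
in particular `ℙ` is not differentiable at `t₁, …, t_{k−1}`. -/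
theorem pressure_phase_transitions
    (k : ℕ) (hk : 2 ≤ k) (β₀ β₂ : ℝ) (hβ2 : 1 < β₂) (hβ : β₂ < β₀)
    (i j L : ℕ → ℕ)
    (hL : ∀ ℓ, 1 ≤ ℓ → ℓ ≤ k → 1 ≤ L ℓ)
    (hij : ∀ ℓ, 1 ≤ ℓ → ℓ ≤ k → i ℓ < j ℓ ∧ j ℓ ≤ L ℓ)
    (am ap : ℕ → ℝ)
    (ham : ∀ ℓ, am ℓ =
      ((j ℓ : ℝ) * Real.log β₂ + ((L ℓ - j ℓ : ℕ) : ℝ) * Real.log β₀) / (L ℓ : ℝ))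
    (hap : ∀ ℓ, ap ℓ =
      ((i ℓ : ℝ) * Real.log β₂ + ((L ℓ - i ℓ : ℕ) : ℝ) * Real.log β₀) / (L ℓ : ℝ))
    (P : ℕ → ℝ → ℝ)
    (hPdef : ∀ ℓ, P ℓ = pressureOf β₀ β₂ (Hset (i ℓ) (j ℓ) (L ℓ)))
    (hh : ℕ → ℝ) (hhdef : ∀ ℓ, hh ℓ = P ℓ 0)
    (τm τp : ℕ → ℝ)
    (hτm : ∀ ℓ, τm ℓ = -(hh ℓ - hh (ℓ + 1)) / (am (ℓ + 1) - ap ℓ))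
    (hτp : ∀ ℓ, τp ℓ = -(hh ℓ - hh (ℓ + 1)) / (ap (ℓ + 1) - am ℓ))
    (hhmono : ∀ ℓ, 1 ≤ ℓ → ℓ < k → hh (ℓ + 1) < hh ℓ)
    (hamono : ∀ ℓ, 1 ≤ ℓ → ℓ < k → ap ℓ < am (ℓ + 1))
    (hτ : ∀ ℓ, 1 ≤ ℓ → ℓ + 1 < k → τp (ℓ + 1) < τm ℓ)
    (Q : ℝ → ℝ)
    (hQ : ∀ t, Q t = ⨆ ℓ : (Set.Icc 1 k : Set ℕ), P ℓ t) :
    -- the pressures exist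
    (∀ ℓ, 1 ≤ ℓ → ℓ ≤ k → ∀ t : ℝ,
      Tendsto (fun n : ℕ => Real.log (Zfun β₀ β₂ (Hset (i ℓ) (j ℓ) (L ℓ)) t n) / n)
        atTop (nhds (P ℓ t))) ∧
    -- the phase-transition parameters
    ∃ T : ℕ → ℝ,
      (∀ ℓ, 1 ≤ ℓ → ℓ + 1 ≤ k - 1 → T (ℓ + 1) < T ℓ) ∧
      T 1 < 0 ∧
      -- (i)
      (∀ t, T 1 < t →
        Q t = P 1 t ∧ ∀ m, 1 ≤ m → m ≤ k → m ≠ 1 → P m t < P 1 t) ∧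
      -- (ii)
      (∀ ℓ, 2 ≤ ℓ → ℓ ≤ k - 1 → ∀ t, T ℓ < t → t < T (ℓ - 1) →
        Q t = P ℓ t ∧ ∀ m, 1 ≤ m → m ≤ k → m ≠ ℓ → P m t < P ℓ t) ∧
      -- (iii)
      (∀ t, t < T (k - 1) →
        Q t = P k t ∧ ∀ m, 1 ≤ m → m ≤ k → m ≠ k → P m t < P k t) ∧
      -- (iv)
      (∀ ℓ, 1 ≤ ℓ → ℓ ≤ k - 1 →
        ∃ Dm Dp : ℝ,
          HasDerivWithinAt Q Dm (Set.Iio (T ℓ)) (T ℓ) ∧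
          HasDerivWithinAt Q Dp (Set.Ioi (T ℓ)) (T ℓ) ∧
          Dm ≤ -(am (ℓ + 1)) ∧ -(am (ℓ + 1)) < -(ap ℓ) ∧ -(ap ℓ) ≤ Dp ∧
          ¬ DifferentiableAt ℝ Q (T ℓ)) :=
  pressure_phase_transitions_general k hk β₀ β₂ hβ2 hβ i j L hij am ap ham hap P hPdef hh hhdef τm
    τp hτm hτp hhmono hamono hτ Q hQ
end

section
/- Let 0 ≤ i ≤ j ≤ L be integers with L ≥ 1 and let β₀ > β₂ > 1 be real. Define ψ : {0,2}^ℤ → ℝ by ψ(ξ) = log β₀ if ξ₀ = 0 and ψ(ξ) = log β₂ if ξ₀ = 2, and set a⁻ = (j log β₂ + (L−j) log β₀)/L and a⁺ = (i log β₂ + (L−i) log β₀)/L. Then for every α ∈ [a⁻, a⁺] there exists ξ ∈ H(i,j,L) such that lim_{n→∞} (1/n) Σ_{m=0}^{n−1} ψ(σ^m ξ) = α. -/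
open Filter

/-- The left shift on `{0,2}^ℤ`. -/
def shift (ξ : ℤ → Bool) : ℤ → Bool := fun n => ξ (n + 1)

/-!
Put `δ = (log β₀ - α) / (log β₀ - log β₂)`, so that `α = log β₀ + δ (log β₂ - log β₀)` and
`α ∈ [a⁻, a⁺]` amounts to `i ≤ δ L ≤ j`. The mechanical word of slope `δ` has a `2` at `m` iff
`⌊δ m⌋ < ⌊δ (m + 1)⌋`, so its window of length `n` at `m` contains `⌊δ (m + n)⌋ - ⌊δ m⌋` twos.
For `n = L` this is `⌊δ L⌋` or `⌈δ L⌉`, hence lies in `[i, j]`; at `m = 0` it is `⌊δ n⌋ ~ δ n`,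
so the Birkhoff averages of `ψ` tend to `log β₀ + δ (log β₂ - log β₀) = α`.
-/

open Finset Filter Topology

lemma shift_iterate_apply (n : ℕ) (ξ : ℤ → Bool) (k : ℤ) : shift^[n] ξ k = ξ (k + n) := by
  induction n generalizing ξ with
  | zero => simp
  | succ n ih =>
    rw [Function.iterate_succ_apply, ih, shift, Nat.cast_succ, add_assoc]

lemma birkhoffSum_shift_of_eq_ite {ψ : (ℤ → Bool) → ℝ} {a b : ℝ}
    (hψ : ∀ ξ : ℤ → Bool, ψ ξ = if ξ 0 = true then b else a) (ξ : ℤ → Bool) (n : ℕ) :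
    birkhoffSum shift ψ n ξ = n * a + zwinCount ξ 0 n * (b - a) := by
  have hterm : ∀ m ∈ range n, ψ (shift^[m] ξ) = a + (if ξ (0 + m) = true then b - a else 0) := by
    intro m _
    rw [hψ, shift_iterate_apply]
    split_ifs <;> ring
  rw [birkhoffSum, sum_congr rfl hterm, sum_add_distrib, sum_ite, sum_const_zero, add_zero,
    sum_const, sum_const, card_range, zwinCount, nsmul_eq_mul, nsmul_eq_mul]

section floor

variable {R : Type*} [Ring R] [LinearOrder R] [IsStrictOrderedRing R] [FloorRing R]

lemma le_floor_add_sub_floor {x y : R} {k : ℤ} (h : k ≤ y) : k ≤ ⌊x + y⌋ - ⌊x⌋ := by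
  have : ⌊x + k⌋ ≤ ⌊x + y⌋ := by gcongr
  rw [Int.floor_add_intCast] at this
  omega

lemma floor_add_sub_floor_le {x y : R} {k : ℤ} (h : y ≤ k) : ⌊x + y⌋ - ⌊x⌋ ≤ k := by
  have : ⌊x + y⌋ ≤ ⌊x + k⌋ := by gcongr
  rw [Int.floor_add_intCast] at this
  omega

end floor

noncomputable def mechanicalWord (δ : ℝ) (m : ℤ) : Bool := ⌊δ * m⌋ < ⌊δ * (m + 1)⌋

section mechanicalWord

variable {δ : ℝ}

lemma ite_mechanicalWord_eq_floor_sub_floor (hδ₀ : 0 ≤ δ) (hδ₁ : δ ≤ 1) (m : ℤ) :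
    (if mechanicalWord δ m = true then 1 else 0 : ℤ) = ⌊δ * (m + 1)⌋ - ⌊δ * m⌋ := by
  have hlo := le_floor_add_sub_floor (x := δ * m) (k := 0) (by simpa using hδ₀)
  have hhi := floor_add_sub_floor_le (x := δ * m) (k := 1) (by simpa using hδ₁)
  rw [← mul_add_one] at hlo hhi
  by_cases h : ⌊δ * m⌋ < ⌊δ * (m + 1)⌋ <;>
    simp only [mechanicalWord, h, decide_true, decide_false, Bool.false_eq_true, ↓reduceIte] <;>
    omega

lemma zwinCount_mechanicalWord (hδ₀ : 0 ≤ δ) (hδ₁ : δ ≤ 1) (m : ℤ) (n : ℕ) :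
    (zwinCount (mechanicalWord δ) m n : ℤ) = ⌊δ * (m + n)⌋ - ⌊δ * m⌋ := by
  rw [zwinCount, natCast_card_filter]
  induction n with
  | zero => simp
  | succ n ih =>
    rw [sum_range_succ, ih, ite_mechanicalWord_eq_floor_sub_floor hδ₀ hδ₁]
    push_cast
    ring_nf

lemma mechanicalWord_mem_Hset (hδ₀ : 0 ≤ δ) (hδ₁ : δ ≤ 1) {i j L : ℕ} (hi : i ≤ δ * L)
    (hj : δ * L ≤ j) :
    mechanicalWord δ ∈ Hset i j L := by
  intro m
  have hcount := zwinCount_mechanicalWord hδ₀ hδ₁ m L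
  rw [mul_add] at hcount
  have hlo := le_floor_add_sub_floor (x := δ * m) (k := i) (by exact_mod_cast hi)
  have hhi := floor_add_sub_floor_le (x := δ * m) (k := j) (by exact_mod_cast hj)
  omega

lemma tendsto_zwinCount_mechanicalWord_div (hδ₀ : 0 ≤ δ) (hδ₁ : δ ≤ 1) :
    Tendsto (fun n : ℕ => (zwinCount (mechanicalWord δ) 0 n : ℝ) / n) atTop (𝓝 δ) := by
  have hfloor (n : ℕ) : (zwinCount (mechanicalWord δ) 0 n : ℝ) = ⌊δ * n⌋₊ := by
    have := zwinCount_mechanicalWord hδ₀ hδ₁ 0 n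
    rw [← Int.natCast_floor_eq_floor (by positivity)] at this
    simp_all
  simp only [hfloor]
  exact (tendsto_nat_floor_mul_div_atTop hδ₀).comp tendsto_natCast_atTop_atTop

lemma tendsto_birkhoffAverage_mechanicalWord (hδ₀ : 0 ≤ δ) (hδ₁ : δ ≤ 1)
    {ψ : (ℤ → Bool) → ℝ} {a b : ℝ} (hψ : ∀ ξ : ℤ → Bool, ψ ξ = if ξ 0 = true then b else a) :
    Tendsto (fun n => birkhoffAverage ℝ shift ψ n (mechanicalWord δ)) atTop
      (𝓝 (a + δ * (b - a))) := by
  refine ((tendsto_zwinCount_mechanicalWord_div hδ₀ hδ₁).mul_const (b - a)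
    |>.const_add a).congr' ?_
  filter_upwards [eventually_ne_atTop 0] with n hn
  rw [birkhoffAverage, birkhoffSum_shift_of_eq_ite hψ, smul_eq_mul]
  field_simp

end mechanicalWord

/-- every value `α` in the interval `[a⁻, a⁺]` is realized as the limit
Birkhoff average of the potential `ψ` (with `ψ(ξ) = log β₀` if `ξ₀ = 0` and
`ψ(ξ) = log β₂` if `ξ₀ = 2`) at some point `ξ ∈ H(i,j,L)`. -/
theorem birkhoff_average_realized
    (i j L : ℕ) (hL : 1 ≤ L) (hij : i ≤ j) (hjL : j ≤ L)
    (β₀ β₂ : ℝ) (hβ2 : 1 < β₂) (hβ : β₂ < β₀)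
    (ψ : (ℤ → Bool) → ℝ)
    (hψ : ∀ ξ : ℤ → Bool, ψ ξ = if ξ 0 = true then Real.log β₂ else Real.log β₀)
    (am ap : ℝ)
    (ham : am = ((j : ℝ) * Real.log β₂ + ((L - j : ℕ) : ℝ) * Real.log β₀) / (L : ℝ))
    (hap : ap = ((i : ℝ) * Real.log β₂ + ((L - i : ℕ) : ℝ) * Real.log β₀) / (L : ℝ))
    (α : ℝ) (hα : α ∈ Set.Icc am ap) :
    ∃ ξ ∈ Hset i j L,
      Tendsto (fun n : ℕ => (∑ m ∈ Finset.range n, ψ (shift^[m] ξ)) / n)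
        atTop (nhds α) := by
  set D := Real.log β₀ - Real.log β₂
  have hD : 0 < D := sub_pos.2 (Real.log_lt_log (by linarith) hβ)
  have hLpos : (0 : ℝ) < L := by exact_mod_cast hL
  set δ := (Real.log β₀ - α) / D with hδ
  have hi : (i : ℝ) ≤ δ * L := by
    have h := hα.2
    rw [hap, Nat.cast_sub (hij.trans hjL), le_div_iff₀ hLpos] at h
    rw [hδ, div_mul_eq_mul_div, le_div_iff₀ hD]
    linarith
  have hj : δ * L ≤ j := by
    have h := hα.1
    rw [ham, Nat.cast_sub hjL, div_le_iff₀ hLpos] at h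
    rw [hδ, div_mul_eq_mul_div, div_le_iff₀ hD]
    linarith
  have hδ₀ : 0 ≤ δ := nonneg_of_mul_nonneg_left ((Nat.cast_nonneg i).trans hi) hLpos
  have hδ₁ : δ ≤ 1 := by
    have : (j : ℝ) ≤ L := by exact_mod_cast hjL
    exact le_of_mul_le_mul_right (by linarith) hLpos
  have hα_eq : α = Real.log β₀ + δ * (Real.log β₂ - Real.log β₀) := by
    rw [hδ]
    field_simp
    ring
  refine ⟨mechanicalWord δ, mechanicalWord_mem_Hset hδ₀ hδ₁ hi hj, ?_⟩
  rw [hα_eq]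
  simpa [birkhoffAverage, birkhoffSum, div_eq_inv_mul]
    using tendsto_birkhoffAverage_mechanicalWord hδ₀ hδ₁ hψ
end
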